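/- A set W of vertices of a graph G (with 2 ≤ |W| ≤ |V|−2) is isolable if and only if for every distinct a, b ∈ W and distinct c, d ∈ V∖W, the number N(a,b;c,d) of edges of G among the pairs {a,c}, {a,d}, {b,c}, {b,d} is even. -/

import Mathlib

/-- The `U`-switching of a graph: toggle exactly the edges between `U` and its complement. -/
def SimpleGraph.switch {V : Type*} (G : SimpleGraph V) (U : Set V) : SimpleGraph V where
  Adj a b := a ≠ b ∧ (G.Adj a b ↔ ((a ∈ U) ↔ (b ∈ U)))
  symm := ⟨fun a b => by
    rintro ⟨h, h2⟩
    refine ⟨h.symm, ?_⟩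
    rw [G.adj_comm]; tauto⟩
  loopless := ⟨fun a => by simp⟩

/-- The complete bipartite graph with parts `U` and `Uᶜ` on vertex set `V`. -/
def completeBipartite {V : Type*} (U : Set V) : SimpleGraph V where
  Adj a b := (a ∈ U ∧ b ∉ U) ∨ (b ∈ U ∧ a ∉ U)
  symm := ⟨fun a b => by beta_reduce; tauto⟩
  loopless := ⟨fun a => by beta_reduce; tauto⟩

/-- `W` is isolable in `G` if `2 ≤ |W|`, `2 ≤ |Wᶜ|`, and some switching of `G`
has no edges between `W` and `Wᶜ`. -/
def SimpleGraph.Isolable {V : Type*} (G : SimpleGraph V) (W : Set V) : Prop :=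
  2 ≤ W.ncard ∧ 2 ≤ Wᶜ.ncard ∧
    ∃ U : Set V, ∀ a ∈ W, ∀ b ∈ Wᶜ, ¬ (G.switch U).Adj a b

def SimpleGraph.SwitchingSeparable {V : Type*} (G : SimpleGraph V) : Prop :=
  ∃ W : Set V, G.Isolable W

/-- The number of edges of `G` among the pairs {a,c}, {a,d}, {b,c}, {b,d}. -/
noncomputable def SimpleGraph.N {V : Type*} (G : SimpleGraph V) (a b c d : V) : ℕ := by
  classical
  exact (if G.Adj a c then 1 else 0) + (if G.Adj a d then 1 else 0) +
    (if G.Adj b c then 1 else 0) + (if G.Adj b d then 1 else 0)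

/-- The circulant graph on `ZMod n` with connection set `{±1, …, ±⌊n/4⌋}`. -/
def circulant (n : ℕ) : SimpleGraph (ZMod n) :=
  SimpleGraph.fromRel (fun a b => ∃ j : ℕ, 1 ≤ j ∧ j ≤ n / 4 ∧ b = a + (j : ZMod n))

/-- Evaluation of a multilinear polynomial over GF(2), given by its coefficient function. -/
def mleval {k : ℕ} (c : Finset (Fin k) → ZMod 2) (x : Fin k → ZMod 2) : ZMod 2 :=
  ∑ s : Finset (Fin k), c s * ∏ i ∈ s, x i

/-- The multilinear polynomial `c` has degree at most `d`. -/
def mldegLE {k : ℕ} (c : Finset (Fin k) → ZMod 2) (d : ℕ) : Prop :=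
  ∀ s : Finset (Fin k), c s ≠ 0 → s.card ≤ d

/-- The graph of a quadratic polynomial: `i ~ j` iff the monomial `x i * x j` occurs. -/
def graphOf {k : ℕ} (c : Finset (Fin k) → ZMod 2) : SimpleGraph (Fin k) where
  Adj i j := i ≠ j ∧ c {i, j} ≠ 0
  symm := ⟨fun i j => by
    rintro ⟨h, h2⟩
    exact ⟨h.symm, by rwa [Finset.pair_comm]⟩⟩
  loopless := ⟨fun i => by simp⟩

/-- The polynomial `c` represents the extended Boolean function `f`
(i.e. they agree on all tuples with an even number of ones). -/
def Represents {k : ℕ} (c : Finset (Fin k) → ZMod 2) (f : (Fin k → ZMod 2) → ZMod 2) : Prop :=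
  ∀ x : Fin k → ZMod 2, (∑ i, x i) = 0 → mleval c x = f x

/-- An extended Boolean function in `k` arguments is separable if on its domain it is the
sum of two Boolean functions depending on disjoint argument sets of at most `k - 2` variables. -/
def EbfSeparable {k : ℕ} (f : (Fin k → ZMod 2) → ZMod 2) : Prop :=
  ∃ A B : Finset (Fin k), Disjoint A B ∧ A.card ≤ k - 2 ∧ B.card ≤ k - 2 ∧
    ∃ g h : (Fin k → ZMod 2) → ZMod 2,
      (∀ x y : Fin k → ZMod 2, (∀ i ∈ A, x i = y i) → g x = g y) ∧
      (∀ x y : Fin k → ZMod 2, (∀ i ∈ B, x i = y i) → h x = h y) ∧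
      ∀ x : Fin k → ZMod 2, (∑ i, x i) = 0 → f x = g x + h x

/-!
Record the edges of `G` by their indicator `e v w ∈ 𝔽₂`. The `U`-switching adds `u v + u w` to
`e v w`, where `u` is the indicator of `U`, so `W` is isolable exactly when `e` restricted to
`W × Wᶜ` has the form `x a + y c`. A function on a product is of that form iff all its
rectangle sums `f a c + f b d - f a d - f b c` vanish (fix a base point `(a₀, c₀)` and take
`x a = f a c₀`, `y c = f a₀ c - f a₀ c₀`), and over `𝔽₂` the rectangle sum of `e` is
`N(a,b;c,d) mod 2`.
-/

theorem exists_eq_add_on_prod_iff {α β M : Type*} [AddCommGroup M] (f : α → β → M)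
    (S : Set α) (T : Set β) :
    (∃ x : α → M, ∃ y : β → M, ∀ a ∈ S, ∀ c ∈ T, f a c = x a + y c) ↔
      ∀ a ∈ S, ∀ b ∈ S, a ≠ b → ∀ c ∈ T, ∀ d ∈ T, c ≠ d → f a c + f b d = f a d + f b c := by
  constructor
  · rintro ⟨x, y, hxy⟩ a ha b hb - c hc d hd -
    rw [hxy a ha c hc, hxy b hb d hd, hxy a ha d hd, hxy b hb c hc]
    abel
  · intro hrect
    have rect (a) (ha : a ∈ S) (b) (hb : b ∈ S) (c) (hc : c ∈ T) (d) (hd : d ∈ T) :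
        f a c + f b d = f a d + f b c := by
      rcases eq_or_ne a b with rfl | hab
      · exact add_comm (f a c) _
      rcases eq_or_ne c d with rfl | hcd
      · rfl
      exact hrect a ha b hb hab c hc d hd hcd
    rcases S.eq_empty_or_nonempty with rfl | ⟨a₀, ha₀⟩
    · exact ⟨0, 0, by simp⟩
    rcases T.eq_empty_or_nonempty with rfl | ⟨c₀, hc₀⟩
    · exact ⟨0, 0, by simp⟩
    refine ⟨fun a => f a c₀, fun c => f a₀ c - f a₀ c₀, fun a ha c hc => ?_⟩
    rw [← add_sub_assoc, eq_sub_iff_add_eq, rect a ha a₀ ha₀ c hc c₀ hc₀]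

namespace SimpleGraph

variable {V : Type*} (G : SimpleGraph V)

open Classical in
noncomputable def adjBit (v w : V) : ZMod 2 := if G.Adj v w then 1 else 0

theorem adjBit_eq_zero_iff {v w : V} : G.adjBit v w = 0 ↔ ¬G.Adj v w := by
  unfold adjBit
  split_ifs <;> simpa

theorem even_N_iff (a b c d : V) :
    Even (G.N a b c d) ↔ G.adjBit a c + G.adjBit b d = G.adjBit a d + G.adjBit b c := by
  unfold N adjBit
  split_ifs <;> decide

theorem adjBit_switch (U : Set V) {v w : V} (hvw : v ≠ w) :
    (G.switch U).adjBit v w = G.adjBit v w + U.indicator 1 v + U.indicator 1 w := by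
  unfold adjBit switch Set.indicator
  simp only [hvw, ne_eq, not_false_eq_true, true_and]
  split_ifs <;> first | decide | tauto

theorem not_adj_switch_iff (U : Set V) {v w : V} (hvw : v ≠ w) :
    ¬(G.switch U).Adj v w ↔ G.adjBit v w = U.indicator 1 v + U.indicator 1 w := by
  rw [← adjBit_eq_zero_iff, adjBit_switch G U hvw, add_assoc, CharTwo.add_eq_zero]

theorem indicator_setOf_eq_one (u : V → ZMod 2) : {v | u v = 1}.indicator 1 = u := by
  ext v
  simp only [Set.indicator, Set.mem_ofPred_eq, Pi.one_apply]
  generalize u v = t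
  revert t
  decide

theorem exists_switch_not_adj_iff (W : Set V) :
    (∃ U : Set V, ∀ a ∈ W, ∀ c ∈ Wᶜ, ¬(G.switch U).Adj a c) ↔
      ∃ x y : V → ZMod 2, ∀ a ∈ W, ∀ c ∈ Wᶜ, G.adjBit a c = x a + y c := by
  have ne {a c : V} (ha : a ∈ W) (hc : c ∈ Wᶜ) : a ≠ c := ne_of_mem_of_not_mem ha hc
  constructor
  · rintro ⟨U, hU⟩
    exact ⟨U.indicator 1, U.indicator 1, fun a ha c hc =>
      (G.not_adj_switch_iff U (ne ha hc)).1 (hU a ha c hc)⟩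
  · rintro ⟨x, y, hxy⟩
    classical
    refine ⟨{v | W.piecewise x y v = 1}, fun a ha c hc => ?_⟩
    rw [G.not_adj_switch_iff _ (ne ha hc), indicator_setOf_eq_one, hxy a ha c hc,
      W.piecewise_eq_of_mem x y ha, W.piecewise_eq_of_notMem x y hc]

end SimpleGraph

theorem isolable_iff_even_N_general {V : Type*} (G : SimpleGraph V) (W : Set V)
    (h2 : 2 ≤ W.ncard) (h2' : 2 ≤ Wᶜ.ncard) :
    G.Isolable W ↔
      ∀ a ∈ W, ∀ b ∈ W, a ≠ b → ∀ c ∈ Wᶜ, ∀ d ∈ Wᶜ, c ≠ d → Even (G.N a b c d) := by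
  simp only [SimpleGraph.Isolable, h2, h2', true_and, G.exists_switch_not_adj_iff,
    exists_eq_add_on_prod_iff, G.even_N_iff]

theorem isolable_iff_even_N {V : Type*} [Fintype V] (G : SimpleGraph V) (W : Set V)
    (h2 : 2 ≤ W.ncard) (h2' : 2 ≤ Wᶜ.ncard) :
    G.Isolable W ↔
      ∀ a ∈ W, ∀ b ∈ W, a ≠ b → ∀ c ∈ Wᶜ, ∀ d ∈ Wᶜ, c ≠ d → Even (G.N a b c d) :=
  isolable_iff_even_N_general G W h2 h2'
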